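/- Given two line segments meeting at a point p with turning angle β ∈ (0, π), and a transition distance ℓ with 0 < ℓ ≤ c (the clearance parameter), the circle arc tangent to both segments at the points located at distance ℓ from p along each segment lies entirely within the safe zone determined by the clearance disk of parameter c. -/

import Mathlib

/-!
The argument uses powers of points. Let `P_C` and `P_D` be the powers of a point with respect
to the clearance circle and the interpolating circle. Their difference is affine, so
`{P_D ≤ P_C}` is a half-space, and it contains the triangle `u₁ p u₂` once it contains its
vertices. At `p` both powers are squared tangent lengths, `ℓ² ≤ c²`. The point `uᵢ` lies on the
interpolating circle and on the tangent of the clearance circle at `tᵢ`, so there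
`P_D = 0 ≤ |uᵢ tᵢ|² = P_C`. On the arc `P_D = 0`, hence `P_C ≥ 0`: the arc avoids the open
clearance disk. It stays in the triangle `t₁ p t₂` because `uᵢ` lies between `p` and `tᵢ`.
-/

open EuclideanGeometry RealInnerProductSpace

lemma convexHull_triple_subset_of_mem_segment {𝕜 E : Type*} [Semiring 𝕜] [PartialOrder 𝕜]
    [AddCommMonoid E] [Module 𝕜 E] {p u₁ u₂ t₁ t₂ : E}
    (h₁ : u₁ ∈ segment 𝕜 p t₁) (h₂ : u₂ ∈ segment 𝕜 p t₂) :
    convexHull 𝕜 {u₁, p, u₂} ⊆ convexHull 𝕜 {t₁, p, t₂} := by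
  have hconv := convex_convexHull 𝕜 ({t₁, p, t₂} : Set E)
  have hp : p ∈ convexHull 𝕜 {t₁, p, t₂} := subset_convexHull 𝕜 _ (by simp)
  have ht₁ : t₁ ∈ convexHull 𝕜 {t₁, p, t₂} := subset_convexHull 𝕜 _ (by simp)
  have ht₂ : t₂ ∈ convexHull 𝕜 {t₁, p, t₂} := subset_convexHull 𝕜 _ (by simp)
  refine convexHull_min ?_ hconv
  simp only [Set.insert_subset_iff, Set.singleton_subset_iff]
  exact ⟨hconv.segment_subset hp ht₁ h₁, hp, hconv.segment_subset hp ht₂ h₂⟩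

lemma mem_segment_of_dist_le {E : Type*} [NormedAddCommGroup E] [NormedSpace ℝ E]
    {x y z w : E} (hz : z ∈ segment ℝ y x) (hw : w ∈ segment ℝ y x)
    (h : dist y z ≤ dist y w) : z ∈ segment ℝ y w := by
  rw [segment_eq_image'] at hz hw
  obtain ⟨θ, ⟨hθ, -⟩, rfl⟩ := hz
  obtain ⟨θ', ⟨hθ', -⟩, rfl⟩ := hw
  rcases eq_or_ne x y with rfl | hxy
  · simp
  have hθθ' : θ ≤ θ' := by
    rw [dist_self_add_right, dist_self_add_right, norm_smul, norm_smul, Real.norm_of_nonneg hθ,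
      Real.norm_of_nonneg hθ'] at h
    exact le_of_mul_le_mul_right h (norm_pos_iff.mpr (sub_ne_zero.mpr hxy))
  rw [mem_segment_iff_wbtw]
  simpa [add_comm] using wbtw_smul_vadd_smul_vadd_of_nonneg_of_le y (x - y) hθ hθθ'

variable {E : Type*} [NormedAddCommGroup E] [InnerProductSpace ℝ E]

lemma inner_sub_eq_zero_of_mem_segment {v x y z w : E} (hz : z ∈ segment ℝ x y)
    (hw : w ∈ segment ℝ x y) (h : ⟪v, y - x⟫ = 0) : ⟪v, z - w⟫ = 0 := by
  rw [segment_eq_image'] at hz hw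
  obtain ⟨θ, -, rfl⟩ := hz
  obtain ⟨θ', -, rfl⟩ := hw
  rw [add_sub_add_left_eq_sub, ← sub_smul, inner_smul_right, h, mul_zero]

namespace EuclideanGeometry.Sphere

lemma power_eq_dist_sq_of_inner_eq_zero {s : Sphere E} {t x : E} (ht : t ∈ s)
    (h : ⟪t - s.center, x - t⟫ = 0) : s.power x = dist x t ^ 2 := by
  rw [power, ← mem_sphere.mp ht, dist_eq_norm, dist_eq_norm, dist_eq_norm,
    ← sub_add_sub_cancel' t s.center x, norm_add_sq_real, h]
  ring

lemma power_eq_dist_sq_of_mem_segment {s : Sphere E} {x y t z : E} (ht : t ∈ s)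
    (hts : t ∈ segment ℝ x y) (hz : z ∈ segment ℝ x y) (h : ⟪t - s.center, y - x⟫ = 0) :
    s.power z = dist z t ^ 2 :=
  power_eq_dist_sq_of_inner_eq_zero ht (inner_sub_eq_zero_of_mem_segment hz hts h)

lemma convex_setOf_power_le_power (s₁ s₂ : Sphere E) :
    Convex ℝ {x | s₁.power x ≤ s₂.power x} := by
  have hset : {x | s₁.power x ≤ s₂.power x} = {x | ⟪(2 : ℝ) • (s₂.center - s₁.center), x⟫ ≤
      ‖s₂.center‖ ^ 2 - s₂.radius ^ 2 - (‖s₁.center‖ ^ 2 - s₁.radius ^ 2)} := by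
    ext x
    simp only [Set.mem_ofPred_eq, power, dist_eq_norm, norm_sub_sq_real, real_inner_smul_left,
      inner_sub_left, real_inner_comm x]
    constructor <;> intro <;> linarith
  rw [hset]
  exact convex_halfSpace_le (innerₛₗ ℝ _).isLinear _

lemma sphere_inter_convexHull_subset_compl_ball {C D : Sphere E} {A : Set E}
    (hC : 0 ≤ C.radius) (hA : ∀ x ∈ A, D.power x ≤ C.power x) :
    Metric.sphere D.center D.radius ∩ convexHull ℝ A ⊆ (Metric.ball C.center C.radius)ᶜ := by
  rintro x ⟨hxD, hxA⟩
  have hD : D.power x = 0 := by rw [power, Metric.mem_sphere.mp hxD, sub_self]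
  have hC' : 0 ≤ C.power x := hD ▸ convexHull_min hA (convex_setOf_power_le_power D C) hxA
  simpa using (power_nonneg_iff_radius_le_dist_center hC).mp hC'

end EuclideanGeometry.Sphere

theorem interpolating_arc_in_safe_zone_general
    (a p b oc o t₁ t₂ u₁ u₂ : EuclideanSpace ℝ (Fin 2))
    (c ℓ rc ρ : ℝ)
    (hℓc : ℓ ≤ c)
    -- clearance disk tangency points, at distance c from p on the segments
    (ht₁ : t₁ ∈ segment ℝ a p) (ht₂ : t₂ ∈ segment ℝ p b)
    (hdt₁ : dist p t₁ = c) (hdt₂ : dist p t₂ = c)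
    (hct₁ : dist oc t₁ = rc) (hct₂ : dist oc t₂ = rc)
    (hperp₁ : inner ℝ (t₁ - oc) (p - a) = (0 : ℝ))
    (hperp₂ : inner ℝ (t₂ - oc) (b - p) = (0 : ℝ))
    -- interpolating circle tangency points, at distance ℓ from p
    (hu₁ : u₁ ∈ segment ℝ a p) (hu₂ : u₂ ∈ segment ℝ p b)
    (hdu₁ : dist p u₁ = ℓ) (hdu₂ : dist p u₂ = ℓ)
    (hcu₁ : dist o u₁ = ρ) (hcu₂ : dist o u₂ = ρ)
    (hperp₁' : inner ℝ (u₁ - o) (p - a) = (0 : ℝ))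
    (hperp₂' : inner ℝ (u₂ - o) (b - p) = (0 : ℝ)) :
    Metric.sphere o ρ ∩ convexHull ℝ {u₁, p, u₂} ⊆
      convexHull ℝ {t₁, p, t₂} \ Metric.ball oc rc := by
  set C : Sphere (EuclideanSpace ℝ (Fin 2)) := ⟨oc, rc⟩
  set D : Sphere (EuclideanSpace ℝ (Fin 2)) := ⟨o, ρ⟩
  have hC₁ : ∀ z ∈ segment ℝ a p, C.power z = dist z t₁ ^ 2 := fun _ hz ↦
    Sphere.power_eq_dist_sq_of_mem_segment (mem_sphere'.mpr hct₁) ht₁ hz hperp₁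
  have hC₂ : ∀ z ∈ segment ℝ p b, C.power z = dist z t₂ ^ 2 := fun _ hz ↦
    Sphere.power_eq_dist_sq_of_mem_segment (mem_sphere'.mpr hct₂) ht₂ hz hperp₂
  have hD₁ : ∀ z ∈ segment ℝ a p, D.power z = dist z u₁ ^ 2 := fun _ hz ↦
    Sphere.power_eq_dist_sq_of_mem_segment (mem_sphere'.mpr hcu₁) hu₁ hz hperp₁'
  have hD₂ : ∀ z ∈ segment ℝ p b, D.power z = dist z u₂ ^ 2 := fun _ hz ↦
    Sphere.power_eq_dist_sq_of_mem_segment (mem_sphere'.mpr hcu₂) hu₂ hz hperp₂'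
  have hvertices : ∀ x ∈ ({u₁, p, u₂} : Set _), D.power x ≤ C.power x := by
    simp only [Set.mem_insert_iff, Set.mem_singleton_iff, forall_eq_or_imp, forall_eq]
    refine ⟨?_, ?_, ?_⟩
    · rw [hD₁ u₁ hu₁, hC₁ u₁ hu₁, dist_self, zero_pow two_ne_zero]; positivity
    · rw [hD₁ p (right_mem_segment ℝ a p), hC₁ p (right_mem_segment ℝ a p), hdu₁, hdt₁]
      exact pow_le_pow_left₀ (hdu₁ ▸ dist_nonneg) hℓc 2
    · rw [hD₂ u₂ hu₂, hC₂ u₂ hu₂, dist_self, zero_pow two_ne_zero]; positivity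
  have hu₁t₁ : u₁ ∈ segment ℝ p t₁ := mem_segment_of_dist_le (segment_symm ℝ a p ▸ hu₁)
    (segment_symm ℝ a p ▸ ht₁) (hdu₁ ▸ hdt₁ ▸ hℓc)
  have hu₂t₂ : u₂ ∈ segment ℝ p t₂ := mem_segment_of_dist_le hu₂ ht₂ (hdu₂ ▸ hdt₂ ▸ hℓc)
  have hrc : 0 ≤ rc := hct₁ ▸ dist_nonneg
  exact fun x hx ↦ ⟨convexHull_triple_subset_of_mem_segment hu₁t₁ hu₂t₂ hx.2,
    Sphere.sphere_inter_convexHull_subset_compl_ball (C := C) (D := D) hrc hvertices hx⟩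

/-- Two segments `[a, p]` and `[p, b]` meet at `p` with turning angle
`β ∈ (0, π)`.  The clearance disk (center `oc`, radius `rc`) is tangent to both
segments at points `t₁`, `t₂` located at distance `c` from `p`; the safe zone
is the region between the disk and the segments, i.e. the triangle
`t₁ p t₂` minus the open disk.  The interpolating circle for a parameter
`0 < ℓ ≤ c` (center `o`, radius `ρ`) is tangent to both segments at points
`u₁`, `u₂` at distance `ℓ` from `p`; its arc between the tangency points on
the inner side of the angle is the part of the circle inside the triangle
`u₁ p u₂`.  Claim: this arc lies entirely within the safe zone. -/
theorem interpolating_arc_in_safe_zone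
    (a p b oc o t₁ t₂ u₁ u₂ : EuclideanSpace ℝ (Fin 2))
    (c ℓ rc ρ β : ℝ)
    (hc : 0 < c) (hℓ : 0 < ℓ) (hℓc : ℓ ≤ c)
    (hrc : 0 < rc) (hρ : 0 < ρ)
    (hβ : β = InnerProductGeometry.angle (p - a) (b - p))
    (hβ0 : 0 < β) (hβπ : β < π)
    -- clearance disk tangency points, at distance c from p on the segments
    (ht₁ : t₁ ∈ segment ℝ a p) (ht₂ : t₂ ∈ segment ℝ p b)
    (hdt₁ : dist p t₁ = c) (hdt₂ : dist p t₂ = c)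
    (hct₁ : dist oc t₁ = rc) (hct₂ : dist oc t₂ = rc)
    (hperp₁ : inner ℝ (t₁ - oc) (p - a) = (0 : ℝ))
    (hperp₂ : inner ℝ (t₂ - oc) (b - p) = (0 : ℝ))
    -- interpolating circle tangency points, at distance ℓ from p
    (hu₁ : u₁ ∈ segment ℝ a p) (hu₂ : u₂ ∈ segment ℝ p b)
    (hdu₁ : dist p u₁ = ℓ) (hdu₂ : dist p u₂ = ℓ)
    (hcu₁ : dist o u₁ = ρ) (hcu₂ : dist o u₂ = ρ)
    (hperp₁' : inner ℝ (u₁ - o) (p - a) = (0 : ℝ))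
    (hperp₂' : inner ℝ (u₂ - o) (b - p) = (0 : ℝ))
    -- both centers lie on the inner side: on the inner bisector of the angle at p
    (hbis : InnerProductGeometry.angle (a - p) (oc - p)
          = InnerProductGeometry.angle (b - p) (oc - p))
    (hbis' : InnerProductGeometry.angle (a - p) (o - p)
           = InnerProductGeometry.angle (b - p) (o - p)) :
    Metric.sphere o ρ ∩ convexHull ℝ {u₁, p, u₂} ⊆
      convexHull ℝ {t₁, p, t₂} \ Metric.ball oc rc :=
  interpolating_arc_in_safe_zone_general a p b oc o t₁ t₂ u₁ u₂ c ℓ rc ρ hℓc ht₁ ht₂ hdt₁ hdt₂ hct₁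
    hct₂ hperp₁ hperp₂ hu₁ hu₂ hdu₁ hdu₂ hcu₁ hcu₂ hperp₁' hperp₂'
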